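/- Gauge invariance of the constrained mechanical model with Hamiltonian and on-shell-trivial modifications: let x, p : ℝ → ℝ^n and λ, ε : ℝ → ℝ^r be smooth curves, define along them δx^i := Σ_a ε^a ∂G_a/∂p_i(x,p), δp_i := Σ_a ε^a ( −∂G_a/∂x^i(x,p) + Σ_b ω^b_{ia}(x) G_b(x,p) ), δλ^a := dε^a/dt − Σ_{b,c} C^a_{bc} λ^b ε^c + Σ_b V_b^a ε^b + Σ_{i,b} ω^a_{ib}(x) ( dx^i/dt − ∂H/∂p_i(x,p) − Σ_c λ^c ∂G_c/∂p_i(x,p) ) ε^b, and let δL(t) be the derivative at s = 0 of L_s(t) := Σ_i ( p_i + s δp_i ) d(x^i + s δx^i)/dt − H(x + s δx, p + s δp) − Σ_a ( λ^a + s δλ^a ) G_a(x + s δx, p + s δp). Then for all t, δL(t) = d/dt [ Σ_a ε^a ( Σ_i p_i ∂G_a/∂p_i(x,p) − G_a(x,p) ) ]; in particular the action ∫ L dt is invariant for compactly supported ε. -/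

import Mathlib

open scoped BigOperators

/-- `∂f/∂x^i` on phase space `ℝ^n × ℝ^n`. -/
noncomputable def pdx {n : ℕ} (f : (Fin n → ℝ) × (Fin n → ℝ) → ℝ) (i : Fin n)
    (z : (Fin n → ℝ) × (Fin n → ℝ)) : ℝ :=
  fderiv ℝ f z (Pi.single i 1, 0)

/-- `∂f/∂p_i` on phase space `ℝ^n × ℝ^n`. -/
noncomputable def pdp {n : ℕ} (f : (Fin n → ℝ) × (Fin n → ℝ) → ℝ) (i : Fin n)
    (z : (Fin n → ℝ) × (Fin n → ℝ)) : ℝ :=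
  fderiv ℝ f z (0, Pi.single i 1)

/-- The canonical Poisson bracket on `ℝ^n × ℝ^n`. -/
noncomputable def pbr {n : ℕ} (f g : (Fin n → ℝ) × (Fin n → ℝ) → ℝ)
    (z : (Fin n → ℝ) × (Fin n → ℝ)) : ℝ :=
  ∑ i, (pdx f i z * pdp g i z - pdp f i z * pdx g i z)

/-! The variation `δz = (δx, δp)` is the Hamiltonian vector field of `εᵃ G_a`, shifted in the
`p`-directions by `W_i = Σ_{a,b} εᵃ ω^b_{ia} G_b`; hence `dF(δz) = Σ_a εᵃ {F, G_a} + Σ_i W_i ∂F/∂p_i`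
for every `F`. Applied to `H` and to the `G_a`, the first-class relations turn every term of `δL`
that is proportional to a constraint into one that is cancelled by `δλᵃ G_a`: the `C`- and
`V`-terms of `δλ` absorb the brackets, and its `ω`-term absorbs all contributions of `W`. What is
left, `Σ_a ε̇ᵃ (p·∂_pG_a − G_a) + εᵃ (p·(∂_pG_a)˙ − ẋ·∂_xG_a)`, is the time derivative of the
boundary term, the `ṗ`-contributions to the latter cancelling each other. -/

section PhaseSpace

variable {n r : ℕ}

theorem fderiv_apply_eq_sum_pdx_add_sum_pdp (f : (Fin n → ℝ) × (Fin n → ℝ) → ℝ)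
    (z : (Fin n → ℝ) × (Fin n → ℝ)) (v w : Fin n → ℝ) :
    fderiv ℝ f z (v, w) = ∑ i, v i * pdx f i z + ∑ i, w i * pdp f i z := by
  have hvw : (v, w) = ∑ i, v i • ((Pi.single i 1 : Fin n → ℝ), (0 : Fin n → ℝ))
      + ∑ i, w i • ((0 : Fin n → ℝ), (Pi.single i 1 : Fin n → ℝ)) := by
    ext j <;> simp [Prod.fst_sum, Prod.snd_sum, Pi.single_apply]
  rw [hvw, map_add, map_sum, map_sum]
  simp only [map_smul, smul_eq_mul, pdx, pdp]

theorem pbr_anticomm (f g : (Fin n → ℝ) × (Fin n → ℝ) → ℝ) (z : (Fin n → ℝ) × (Fin n → ℝ)) :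
    pbr f g z = -pbr g f z := by
  simp only [pbr, ← Finset.sum_neg_distrib]
  exact Finset.sum_congr rfl fun i _ => by ring

theorem fderiv_apply_gaugeVariation (F : (Fin n → ℝ) × (Fin n → ℝ) → ℝ)
    (G : Fin r → (Fin n → ℝ) × (Fin n → ℝ) → ℝ) (ε : Fin r → ℝ) (W : Fin n → ℝ)
    (z : (Fin n → ℝ) × (Fin n → ℝ)) :
    fderiv ℝ F z (fun i => ∑ a, ε a * pdp (G a) i z, fun i => W i - ∑ a, ε a * pdx (G a) i z)
      = ∑ a, ε a * pbr F (G a) z + ∑ i, W i * pdp F i z := by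
  simp only [fderiv_apply_eq_sum_pdx_add_sum_pdp, pbr, sub_mul, mul_sub, Finset.mul_sum,
    Finset.sum_mul, Finset.sum_sub_distrib, Finset.sum_comm (γ := Fin n) (α := Fin r)]
  simp only [mul_comm, mul_left_comm]
  ring

theorem sum_kineticVariation_eq (gx gp Gd : Fin r → Fin n → ℝ) (P Xd W : Fin n → ℝ)
    (ε ε' : Fin r → ℝ) (δp δXd : Fin n → ℝ)
    (hδp : δp = fun i => W i - ∑ a, ε a * gx a i)
    (hδXd : ∀ i, δXd i = ∑ a, (ε' a * gp a i + ε a * Gd a i)) :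
    ∑ i, (δp i * Xd i + P i * δXd i)
      = ∑ i, W i * Xd i - ∑ a, ε a * ∑ i, Xd i * gx a i
        + ∑ a, ε' a * ∑ i, P i * gp a i + ∑ a, ε a * ∑ i, P i * Gd a i := by
  simp only [hδp, hδXd, sub_mul, mul_add, Finset.mul_sum, Finset.sum_mul, Finset.sum_add_distrib,
    Finset.sum_sub_distrib, Finset.sum_comm (γ := Fin n) (α := Fin r)]
  simp only [mul_comm, mul_left_comm]
  ring

theorem sum_dlam_mul_eq (C : Fin r → Fin r → Fin r → ℝ) (V : Fin r → Fin r → ℝ)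
    (ω : Fin r → Fin n → Fin r → ℝ) (g lam ε ε' δlam : Fin r → ℝ) (K : Fin n → ℝ)
    (hδlam : ∀ a, δlam a = ε' a - (∑ b, ∑ c, C b c a * lam b * ε c) + (∑ b, V b a * ε b)
      + ∑ i, ∑ b, ω a i b * K i * ε b) :
    ∑ a, δlam a * g a = ∑ a, ε' a * g a - ∑ b, lam b * ∑ c, ε c * ∑ a, C b c a * g a
      + ∑ b, ε b * ∑ a, V b a * g a + ∑ i, (∑ a, ε a * ∑ b, ω b i a * g b) * K i := by
  have hCterm : ∑ a, (∑ b, ∑ c, C b c a * lam b * ε c) * g a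
      = ∑ b, lam b * ∑ c, ε c * ∑ a, C b c a * g a := by
    simp only [Finset.sum_mul, Finset.mul_sum]
    rw [← Finset.sum_comm_cycle]
    exact Finset.sum_congr rfl fun _ _ => Finset.sum_congr rfl fun _ _ =>
      Finset.sum_congr rfl fun _ _ => by ring
  have hVterm : ∑ a, (∑ b, V b a * ε b) * g a = ∑ b, ε b * ∑ a, V b a * g a := by
    simp only [Finset.sum_mul, Finset.mul_sum]
    rw [Finset.sum_comm]
    exact Finset.sum_congr rfl fun _ _ => Finset.sum_congr rfl fun _ _ => by ring
  have hωterm : ∑ a, (∑ i, ∑ b, ω a i b * K i * ε b) * g a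
      = ∑ i, (∑ a, ε a * ∑ b, ω b i a * g b) * K i := by
    simp only [Finset.sum_mul, Finset.mul_sum]
    rw [← Finset.sum_comm_cycle]
    exact Finset.sum_congr rfl fun _ _ => Finset.sum_congr rfl fun _ _ =>
      Finset.sum_congr rfl fun _ _ => by ring
  simp only [hδlam, add_mul, sub_mul, Finset.sum_add_distrib, Finset.sum_sub_distrib,
    hCterm, hVterm, hωterm]

theorem lagrangianVariation_eq_boundaryTerm_deriv (G : Fin r → (Fin n → ℝ) × (Fin n → ℝ) → ℝ)
    (C : Fin r → Fin r → Fin r → ℝ) (H : (Fin n → ℝ) × (Fin n → ℝ) → ℝ) (V : Fin r → Fin r → ℝ)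
    (ω : Fin r → Fin n → Fin r → ℝ) (X P Xd : Fin n → ℝ) (lam ε ε' : Fin r → ℝ)
    (Gd : Fin r → Fin n → ℝ)
    (hfc : ∀ a b, pbr (G a) (G b) (X, P) = ∑ c, C a b c * G c (X, P))
    (hGH : ∀ a, pbr (G a) H (X, P) = ∑ b, V a b * G b (X, P))
    (δx δp δXd : Fin n → ℝ) (δlam : Fin r → ℝ)
    (hδx : ∀ i, δx i = ∑ a, ε a * pdp (G a) i (X, P))
    (hδp : ∀ i, δp i = ∑ a, ε a * (-pdx (G a) i (X, P) + ∑ b, ω b i a * G b (X, P)))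
    (hδXd : ∀ i, δXd i = ∑ a, (ε' a * pdp (G a) i (X, P) + ε a * Gd a i))
    (hδlam : ∀ a, δlam a = ε' a - (∑ b, ∑ c, C b c a * lam b * ε c) + (∑ b, V b a * ε b)
      + ∑ i, ∑ b, ω a i b * (Xd i - pdp H i (X, P) - ∑ c, lam c * pdp (G c) i (X, P)) * ε b) :
    (∑ i, (δp i * Xd i + P i * δXd i)) - fderiv ℝ H (X, P) (δx, δp)
        - ∑ a, (δlam a * G a (X, P) + lam a * fderiv ℝ (G a) (X, P) (δx, δp))
      = ∑ a, (ε' a * ((∑ i, P i * pdp (G a) i (X, P)) - G a (X, P))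
          + ε a * ((∑ i, P i * Gd a i) - ∑ i, Xd i * pdx (G a) i (X, P))) := by
  set z : (Fin n → ℝ) × (Fin n → ℝ) := (X, P)
  set W : Fin n → ℝ := fun i => ∑ a, ε a * ∑ b, ω b i a * G b z
  have hδp' : δp = fun i => W i - ∑ a, ε a * pdx (G a) i z := by
    ext i
    simp only [hδp, W, mul_add, mul_neg, Finset.sum_add_distrib, Finset.sum_neg_distrib]
    ring
  have hδ : (δx, δp)
      = (fun i => ∑ a, ε a * pdp (G a) i z, fun i => W i - ∑ a, ε a * pdx (G a) i z) := by
    rw [hδp', ← funext hδx]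
  have hH : fderiv ℝ H z (δx, δp) = -∑ a, ε a * ∑ b, V a b * G b z + ∑ i, W i * pdp H i z := by
    simp only [hδ, fderiv_apply_gaugeVariation, pbr_anticomm H, hGH, mul_neg,
      Finset.sum_neg_distrib]
  have hlamdG : ∑ a, lam a * fderiv ℝ (G a) z (δx, δp)
      = ∑ a, lam a * ∑ c, ε c * ∑ d, C a c d * G d z
        + ∑ i, W i * ∑ a, lam a * pdp (G a) i z := by
    simp only [hδ, fderiv_apply_gaugeVariation, hfc, mul_add, Finset.sum_add_distrib,
      Finset.mul_sum, Finset.sum_comm (γ := Fin r) (α := Fin n)]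
    simp only [mul_left_comm]
  rw [sum_kineticVariation_eq _ _ Gd P Xd W ε ε' δp δXd hδp' hδXd, hH,
    Finset.sum_add_distrib, sum_dlam_mul_eq C V ω _ lam ε ε' δlam _ hδlam, hlamdG]
  simp only [mul_sub, Finset.sum_add_distrib, Finset.sum_sub_distrib]
  ring

theorem differentiable_pdp {f : (Fin n → ℝ) × (Fin n → ℝ) → ℝ} (hf : ContDiff ℝ 2 f)
    (i : Fin n) : Differentiable ℝ (pdp f i) :=
  ((hf.fderiv_right le_rfl).clm_apply contDiff_const).differentiable one_ne_zero

theorem hasDerivAt_lagrangian_line (H : (Fin n → ℝ) × (Fin n → ℝ) → ℝ)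
    (G : Fin r → (Fin n → ℝ) × (Fin n → ℝ) → ℝ) (X P Xd δX δP δXd : Fin n → ℝ)
    (lam δlam : Fin r → ℝ) (hH : DifferentiableAt ℝ H (X, P))
    (hG : ∀ a, DifferentiableAt ℝ (G a) (X, P)) :
    HasDerivAt (fun s : ℝ => (∑ i, (P i + s * δP i) * (Xd i + s * δXd i))
        - H (fun j => X j + s * δX j, fun j => P j + s * δP j)
        - ∑ a, (lam a + s * δlam a) * G a (fun j => X j + s * δX j, fun j => P j + s * δP j))
      ((∑ i, (δP i * Xd i + P i * δXd i)) - fderiv ℝ H (X, P) (δX, δP)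
        - ∑ a, (δlam a * G a (X, P) + lam a * fderiv ℝ (G a) (X, P) (δX, δP))) 0 := by
  have hline : ∀ (A B : ℝ), HasDerivAt (fun s : ℝ => A + s * B) B 0 :=
    fun A B => (hasDerivAt_mul_const B).const_add A
  have hcomp : ∀ f : (Fin n → ℝ) × (Fin n → ℝ) → ℝ, DifferentiableAt ℝ f (X, P) →
      HasDerivAt (fun s : ℝ => f (fun j => X j + s * δX j, fun j => P j + s * δP j))
        (fderiv ℝ f (X, P) (δX, δP)) 0 := fun f hf =>
    hf.hasFDerivAt.comp_hasDerivAt_of_eq 0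
      ((hasDerivAt_pi.2 fun j => hline _ _).prodMk (hasDerivAt_pi.2 fun j => hline _ _))
      (by simp)
  refine ((HasDerivAt.fun_sum fun i _ => ?_).sub (hcomp H hH)).sub
    (HasDerivAt.fun_sum fun a _ => ?_)
  · simpa using (hline (P i) (δP i)).fun_mul (hline (Xd i) (δXd i))
  · simpa using (hline (lam a) (δlam a)).fun_mul (hcomp (G a) (hG a))

theorem deriv_lagrangian_variation (H : (Fin n → ℝ) × (Fin n → ℝ) → ℝ)
    (G : Fin r → (Fin n → ℝ) × (Fin n → ℝ) → ℝ) (x p dx dp : ℝ → Fin n → ℝ)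
    (lam δlam : Fin r → ℝ) (t : ℝ) (hx : ∀ i, DifferentiableAt ℝ (fun u => x u i) t)
    (hdx : ∀ i, DifferentiableAt ℝ (fun u => dx u i) t)
    (hH : DifferentiableAt ℝ H (x t, p t)) (hG : ∀ a, DifferentiableAt ℝ (G a) (x t, p t)) :
    deriv (fun s : ℝ => (∑ i, (p t i + s * dp t i) * deriv (fun u => x u i + s * dx u i) t)
        - H (fun j => x t j + s * dx t j, fun j => p t j + s * dp t j)
        - ∑ a, (lam a + s * δlam a)
            * G a (fun j => x t j + s * dx t j, fun j => p t j + s * dp t j)) 0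
      = (∑ i, (dp t i * deriv (fun u => x u i) t + p t i * deriv (fun u => dx u i) t))
        - fderiv ℝ H (x t, p t) (dx t, dp t)
        - ∑ a, (δlam a * G a (x t, p t) + lam a * fderiv ℝ (G a) (x t, p t) (dx t, dp t)) := by
  have hvel : ∀ (s : ℝ) i, deriv (fun u => x u i + s * dx u i) t
      = deriv (fun u => x u i) t + s * deriv (fun u => dx u i) t := fun s i =>
    ((hx i).hasDerivAt.fun_add ((hdx i).hasDerivAt.const_mul s)).deriv
  simp only [hvel]
  exact (hasDerivAt_lagrangian_line H G (x t) (p t) _ (dx t) (dp t) _ lam δlam hH hG).deriv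

theorem hasDerivAt_gaugeBoundaryTerm {G : Fin r → (Fin n → ℝ) × (Fin n → ℝ) → ℝ}
    {x p : ℝ → Fin n → ℝ} {ε : ℝ → Fin r → ℝ} {Xd Pd : Fin n → ℝ} {ε' : Fin r → ℝ} {t : ℝ}
    (hx : HasDerivAt x Xd t) (hp : HasDerivAt p Pd t)
    (hε : ∀ a, HasDerivAt (fun u => ε u a) (ε' a) t)
    (hG : ∀ a, DifferentiableAt ℝ (G a) (x t, p t))
    (hGp : ∀ a i, DifferentiableAt ℝ (fun u => pdp (G a) i (x u, p u)) t) :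
    HasDerivAt (fun u => ∑ a, ε u a * ((∑ i, p u i * pdp (G a) i (x u, p u)) - G a (x u, p u)))
      (∑ a, (ε' a * ((∑ i, p t i * pdp (G a) i (x t, p t)) - G a (x t, p t))
        + ε t a * ((∑ i, p t i * deriv (fun u => pdp (G a) i (x u, p u)) t)
          - ∑ i, Xd i * pdx (G a) i (x t, p t)))) t := by
  refine HasDerivAt.fun_sum fun a _ => ?_
  have hGa := (hG a).hasFDerivAt.comp_hasDerivAt t (hx.prodMk hp)
  rw [fderiv_apply_eq_sum_pdx_add_sum_pdp] at hGa
  refine ((hε a).fun_mul ((HasDerivAt.fun_sum fun i _ =>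
    (hasDerivAt_pi.1 hp i).fun_mul (hGp a i).hasDerivAt).fun_sub hGa)).congr_deriv ?_
  rw [Finset.sum_add_distrib, Function.comp_apply]
  ring

end PhaseSpace

theorem gauge_invariance_hamiltonian_model_general {n r : ℕ}
    (G : Fin r → (Fin n → ℝ) × (Fin n → ℝ) → ℝ)
    (hG : ∀ a, ContDiff ℝ (⊤ : ℕ∞) (G a))
    (C : Fin r → Fin r → Fin r → (Fin n → ℝ) × (Fin n → ℝ) → ℝ)
    (hfc : ∀ a b z, pbr (G a) (G b) z = ∑ c, C a b c z * G c z)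
    (H : (Fin n → ℝ) × (Fin n → ℝ) → ℝ) (hH : ContDiff ℝ (⊤ : ℕ∞) H)
    (V : Fin r → Fin r → (Fin n → ℝ) × (Fin n → ℝ) → ℝ)
    (hGH : ∀ a z, pbr (G a) H z = ∑ b, V a b z * G b z)
    (ω : Fin r → Fin n → Fin r → (Fin n → ℝ) → ℝ)
    (x p : ℝ → Fin n → ℝ) (lam ε : ℝ → Fin r → ℝ)
    (hx : ContDiff ℝ (⊤ : ℕ∞) x) (hp : ContDiff ℝ (⊤ : ℕ∞) p)
    (hε : ContDiff ℝ (⊤ : ℕ∞) ε)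
    (dx : ℝ → Fin n → ℝ)
    (hdx : ∀ t i, dx t i = ∑ a, ε t a * pdp (G a) i (x t, p t))
    (dp : ℝ → Fin n → ℝ)
    (hdp : ∀ t i, dp t i = ∑ a, ε t a *
      (-pdx (G a) i (x t, p t) + ∑ b, ω b i a (x t) * G b (x t, p t)))
    (dlam : ℝ → Fin r → ℝ)
    (hdlam : ∀ t a, dlam t a =
      deriv (fun u => ε u a) t - (∑ b, ∑ c, C b c a (x t, p t) * lam t b * ε t c)
        + (∑ b, V b a (x t, p t) * ε t b)
        + ∑ i, ∑ b, ω a i b (x t)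
            * (deriv (fun u => x u i) t - pdp H i (x t, p t)
                - ∑ c, lam t c * pdp (G c) i (x t, p t)) * ε t b)
    (L : ℝ → ℝ → ℝ)
    (hL : ∀ s t, L s t =
      (∑ i, (p t i + s * dp t i) * deriv (fun u => x u i + s * dx u i) t)
        - H (fun j => x t j + s * dx t j, fun j => p t j + s * dp t j)
        - ∑ a, (lam t a + s * dlam t a)
            * G a (fun j => x t j + s * dx t j, fun j => p t j + s * dp t j)) :
    ∀ t, deriv (fun s => L s t) 0
        = deriv (fun u => ∑ a, ε u a *
            ((∑ i, p u i * pdp (G a) i (x u, p u)) - G a (x u, p u))) t := by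
  intro t
  have hxD : Differentiable ℝ x := hx.differentiable (by simp)
  have hpD : Differentiable ℝ p := hp.differentiable (by simp)
  have hεD : Differentiable ℝ ε := hε.differentiable (by simp)
  have hGD : ∀ a, Differentiable ℝ (G a) := fun a => (hG a).differentiable (by simp)
  have hGp : ∀ a i, DifferentiableAt ℝ (fun u => pdp (G a) i (x u, p u)) t := fun a i =>
    ((differentiable_pdp ((hG a).of_le (WithTop.coe_le_coe.2 le_top)) i).comp
      (hxD.prodMk hpD)) t
  have hεt : ∀ a, HasDerivAt (fun u => ε u a) (deriv (fun u => ε u a) t) t := fun a =>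
    (differentiableAt_pi.1 (hεD t) a).hasDerivAt
  have hdxt : ∀ i, HasDerivAt (fun u => dx u i)
      (∑ a, (deriv (fun u => ε u a) t * pdp (G a) i (x t, p t)
        + ε t a * deriv (fun u => pdp (G a) i (x u, p u)) t)) t := fun i => by
    simp only [hdx]
    exact HasDerivAt.fun_sum fun a _ => (hεt a).fun_mul (hGp a i).hasDerivAt
  rw [funext (hL · t), deriv_lagrangian_variation H G x p dx dp (lam t) (dlam t) t
      (fun i => differentiableAt_pi.1 (hxD t) i) (fun i => (hdxt i).differentiableAt)
      (hH.differentiable (by simp) _) (fun a => hGD a _),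
    (hasDerivAt_gaugeBoundaryTerm
      (hasDerivAt_pi.2 fun i => (differentiableAt_pi.1 (hxD t) i).hasDerivAt) (hpD t).hasDerivAt hεt
      (fun a => hGD a _) hGp).deriv]
  exact lagrangianVariation_eq_boundaryTerm_deriv G (fun a b c => C a b c (x t, p t)) H
    (fun a b => V a b (x t, p t)) (fun b i a => ω b i a (x t)) (x t) (p t) _ (lam t) (ε t) _ _
    (fun a b => hfc a b _) (fun a => hGH a _) (dx t) (dp t) _ (dlam t) (hdx t) (hdp t)
    (fun i => (hdxt i).deriv) (hdlam t)

/-- Gauge invariance of the constrained mechanical model with Hamiltonian `H` and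
on-shell-trivial modifications `ω^b_{ia}` (written `ω b i a`) of the gauge generators: the
variation of `L = Σ_i p_i ẋ^i − H − Σ_a λ^a G_a` is the total time derivative
`d/dt [ Σ_a ε^a ( Σ_i p_i ∂G_a/∂p_i − G_a ) ]`. -/
theorem gauge_invariance_hamiltonian_model {n r : ℕ}
    (G : Fin r → (Fin n → ℝ) × (Fin n → ℝ) → ℝ)
    (hG : ∀ a, ContDiff ℝ (⊤ : ℕ∞) (G a))
    (C : Fin r → Fin r → Fin r → (Fin n → ℝ) × (Fin n → ℝ) → ℝ)
    (hC : ∀ a b c, ContDiff ℝ (⊤ : ℕ∞) (C a b c))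
    (hCanti : ∀ a b c z, C a b c z = - C b a c z)
    (hfc : ∀ a b z, pbr (G a) (G b) z = ∑ c, C a b c z * G c z)
    (H : (Fin n → ℝ) × (Fin n → ℝ) → ℝ) (hH : ContDiff ℝ (⊤ : ℕ∞) H)
    (V : Fin r → Fin r → (Fin n → ℝ) × (Fin n → ℝ) → ℝ)
    (hV : ∀ a b, ContDiff ℝ (⊤ : ℕ∞) (V a b))
    (hGH : ∀ a z, pbr (G a) H z = ∑ b, V a b z * G b z)
    (ω : Fin r → Fin n → Fin r → (Fin n → ℝ) → ℝ)
    (hω : ∀ b i a, ContDiff ℝ (⊤ : ℕ∞) (ω b i a))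
    (x p : ℝ → Fin n → ℝ) (lam ε : ℝ → Fin r → ℝ)
    (hx : ContDiff ℝ (⊤ : ℕ∞) x) (hp : ContDiff ℝ (⊤ : ℕ∞) p)
    (hlam : ContDiff ℝ (⊤ : ℕ∞) lam) (hε : ContDiff ℝ (⊤ : ℕ∞) ε)
    (dx : ℝ → Fin n → ℝ)
    (hdx : ∀ t i, dx t i = ∑ a, ε t a * pdp (G a) i (x t, p t))
    (dp : ℝ → Fin n → ℝ)
    (hdp : ∀ t i, dp t i = ∑ a, ε t a *
      (-pdx (G a) i (x t, p t) + ∑ b, ω b i a (x t) * G b (x t, p t)))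
    (dlam : ℝ → Fin r → ℝ)
    (hdlam : ∀ t a, dlam t a =
      deriv (fun u => ε u a) t - (∑ b, ∑ c, C b c a (x t, p t) * lam t b * ε t c)
        + (∑ b, V b a (x t, p t) * ε t b)
        + ∑ i, ∑ b, ω a i b (x t)
            * (deriv (fun u => x u i) t - pdp H i (x t, p t)
                - ∑ c, lam t c * pdp (G c) i (x t, p t)) * ε t b)
    (L : ℝ → ℝ → ℝ)
    (hL : ∀ s t, L s t =
      (∑ i, (p t i + s * dp t i) * deriv (fun u => x u i + s * dx u i) t)
        - H (fun j => x t j + s * dx t j, fun j => p t j + s * dp t j)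
        - ∑ a, (lam t a + s * dlam t a)
            * G a (fun j => x t j + s * dx t j, fun j => p t j + s * dp t j)) :
    ∀ t, deriv (fun s => L s t) 0
        = deriv (fun u => ∑ a, ε u a *
            ((∑ i, p u i * pdp (G a) i (x u, p u)) - G a (x u, p u))) t :=
  gauge_invariance_hamiltonian_model_general G hG C hfc H hH V hGH ω x p lam ε hx hp hε dx hdx dp
    hdp dlam hdlam L hL
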